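/- Let T be a simple graph which is a tree (connected and acyclic), let (Γ_v) be a family of sets indexed by the vertices of T, and for every ordered pair (u, v) of adjacent vertices of T let φ_{u,v} be a partial bijection from Γ_u to Γ_v (a PartialEquiv) such that φ_{v,u} = (φ_{u,v}).symm for all adjacent u, v. Define a simple graph F on the vertex set Σ v, Γ_v by declaring (u, x) adjacent to (v, y) if and only if u and v are adjacent in T, x lies in the source of φ_{u,v}, and φ_{u,v}(x) = y. Then F is acyclic; in particular every connected component of F is a tree, i.e., F is a forest. -/

import Mathlib

/-!
The projection `F → T`, `(v, x) ↦ v`, is a graph homomorphism that is injective on every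
neighbourhood, because each `φ u v` is a function. Such a map sends a path to a walk in which no
edge is immediately retraversed, and in an acyclic graph such walks are paths. Walks lift
uniquely along it from a given start, so two paths in `F` between the same vertices project to
paths in `T` that coincide, and hence coincide themselves.
-/

namespace SimpleGraph

variable {V W : Type*} {G : SimpleGraph V} {H : SimpleGraph W}

def Hom.IsLocallyInjective (f : G →g H) : Prop :=
  ∀ ⦃v w₁ w₂ : V⦄, G.Adj v w₁ → G.Adj v w₂ → f w₁ = f w₂ → w₁ = w₂

namespace Hom.IsLocallyInjective

variable {f : G →g H}

theorem map_injective (hf : f.IsLocallyInjective) :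
    ∀ {u v : V} (p q : G.Walk u v), p.map f = q.map f → p = q
  | _, _, .nil, .nil, _ => rfl
  | _, _, .nil, .cons _ _, h => by simpa using congrArg Walk.length h
  | _, _, .cons _ _, .nil, h => by simpa using congrArg Walk.length h
  | _, _, .cons h₁ p, .cons h₂ q, h => by
    simp only [Walk.map_cons, Walk.cons.injEq] at h
    obtain rfl := hf h₁ h₂ h.1
    rw [map_injective hf p q (eq_of_heq h.2)]

theorem isChain_edges_map (hf : f.IsLocallyInjective) :
    ∀ {u v : V} (p : G.Walk u v),
      p.edges.IsChain (· ≠ ·) → (p.map f).edges.IsChain (· ≠ ·)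
  | _, _, .nil, _ => by simp
  | _, _, .cons _ .nil, _ => by simp
  | _, _, .cons h₁ (.cons h₂ p), hp => by
    simp only [Walk.edges_cons, List.isChain_cons_cons] at hp
    simp only [Walk.map_cons, Walk.edges_cons, List.isChain_cons_cons]
    refine ⟨fun he => hp.1 ?_, isChain_edges_map hf (.cons h₂ p) (by simpa using hp.2)⟩
    rw [Sym2.eq_swap, Sym2.congr_right] at he ⊢
    exact hf h₁.symm h₂ he

theorem isPath_map (hf : f.IsLocallyInjective) (hH : H.IsAcyclic) {u v : V} {p : G.Walk u v}
    (hp : p.IsPath) : (p.map f).IsPath :=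
  (hH.isPath_iff_isChain _).2 <|
    hf.isChain_edges_map p (Walk.edges_nodup_of_support_nodup hp.support_nodup).isChain

end Hom.IsLocallyInjective

theorem IsAcyclic.of_isLocallyInjective (f : G →g H) (hf : f.IsLocallyInjective)
    (hH : H.IsAcyclic) : G.IsAcyclic :=
  isAcyclic_iff_subsingleton_path.2 fun _ _ => ⟨fun p q => Subtype.ext <|
    hf.map_injective p.1 q.1 <| congrArg Subtype.val <|
      (hH.subsingleton_path _ _).elim ⟨_, hf.isPath_map hH p.2⟩ ⟨_, hf.isPath_map hH q.2⟩⟩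

end SimpleGraph

theorem forest_of_tree_of_partial_isos_general {V : Type*} (T : SimpleGraph V)
    (hT : T.IsTree) (Γ : V → Type*)
    (φ : ∀ u v : V, T.Adj u v → PartialEquiv (Γ u) (Γ v))
    (F : SimpleGraph (Σ v : V, Γ v))
    (hF : ∀ p q : Σ v : V, Γ v, F.Adj p q ↔
      ∃ h : T.Adj p.1 q.1, p.2 ∈ (φ p.1 q.1 h).source ∧ φ p.1 q.1 h p.2 = q.2) :
    F.IsAcyclic := by
  let π : F →g T := ⟨Sigma.fst, fun h => ((hF _ _).1 h).1⟩
  refine .of_isLocallyInjective π ?_ hT.isAcyclic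
  rintro ⟨u, x⟩ ⟨v, y⟩ ⟨v', y'⟩ hadj hadj' (rfl : v = v')
  obtain ⟨_, -, hy⟩ := (hF _ _).1 hadj
  obtain ⟨_, -, hy'⟩ := (hF _ _).1 hadj'
  exact congrArg (Sigma.mk v) (hy.symm.trans hy')

/-- Let `T` be a tree, `(Γ v)` a family of sets indexed by the
vertices of `T`, and for every ordered pair of adjacent vertices `u, v` a
partial bijection `φ u v : Γ u → Γ v` with `φ v u = (φ u v).symm`.  Then the
graph `F` on `Σ v, Γ v` in which `(u, x)` and `(v, y)` are adjacent iff `u, v`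
are adjacent in `T`, `x ∈ (φ u v).source` and `φ u v x = y`, is acyclic, i.e.
`F` is a forest. -/
theorem forest_of_tree_of_partial_isos {V : Type*} (T : SimpleGraph V)
    (hT : T.IsTree) (Γ : V → Type*)
    (φ : ∀ u v : V, T.Adj u v → PartialEquiv (Γ u) (Γ v))
    (hsymm : ∀ (u v : V) (h : T.Adj u v), φ v u h.symm = (φ u v h).symm)
    (F : SimpleGraph (Σ v : V, Γ v))
    (hF : ∀ p q : Σ v : V, Γ v, F.Adj p q ↔
      ∃ h : T.Adj p.1 q.1, p.2 ∈ (φ p.1 q.1 h).source ∧ φ p.1 q.1 h p.2 = q.2) :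
    F.IsAcyclic :=
  forest_of_tree_of_partial_isos_general T hT Γ φ F hF
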